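/- Let (X,d) be a compact metric space, f_{1,∞} an NDS on X, μ a Borel probability measure on X, Z ⊆ X, and s ∈ ℝ. If h̲_μ(f_{1,∞},x) ≤ s for every x ∈ Z, then h^B_{top}(f_{1,∞},Z) ≤ s and h^{WB}_{top}(f_{1,∞},Z) ≤ s. -/

import Mathlib

open Filter MeasureTheory Set ENNReal

noncomputable section

variable {X : Type} [MetricSpace X]

/-- The iterate `f_1^n = f_n ∘ ⋯ ∘ f_1` of the NDS `f`, where `f 0` is the first map `f_1`. -/
def nIter (f : ℕ → X → X) : ℕ → X → X
  | 0 => id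
  | n + 1 => f n ∘ nIter f n

/-- The Bowen (dynamical) ball `B_n(x, ε)` for the Bowen metric
`d_n(x,y) = max_{0 ≤ j < n} d(f_1^j x, f_1^j y)`. -/
def bowenBall (f : ℕ → X → X) (n : ℕ) (x : X) (ε : ℝ) : Set X :=
  {y | ∀ j < n, dist (nIter f j x) (nIter f j y) < ε}

/-- The Birkhoff sum `S_{1,n} ψ (x) = ∑_{j=0}^{n-1} ψ(f_1^j x)`. -/
def birkSum (f : ℕ → X → X) (ψ : X → ℝ) (n : ℕ) (x : X) : ℝ :=
  ∑ j ∈ Finset.range n, ψ (nIter f j x)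

/-- `S_{1,n} ψ (x, ε) = sup_{y ∈ B_n(x,ε)} S_{1,n} ψ (y)`. -/
def birkSupBall (f : ℕ → X → X) (ψ : X → ℝ) (n : ℕ) (x : X) (ε : ℝ) : ℝ :=
  sSup (birkSum f ψ n '' bowenBall f n x ε)

/-- `M(n, α, ε, Z, ψ)`: infimum of `∑_i exp(-α n_i + S_{1,n_i}ψ(x_i, ε))` over all finite or
countable covers `Z ⊆ ⋃_i B_{n_i}(x_i, ε)` with `n_i ≥ n`. -/
def Mpre (f : ℕ → X → X) (ψ : X → ℝ) (Z : Set X) (n : ℕ) (α ε : ℝ) : ℝ≥0∞ :=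
  sInf { S : ℝ≥0∞ | ∃ (u : Set ℕ) (c : ℕ → X) (m : ℕ → ℕ),
    (∀ i ∈ u, n ≤ m i) ∧ (Z ⊆ ⋃ i ∈ u, bowenBall f (m i) (c i) ε) ∧
    S = ∑' i : u, ENNReal.ofReal (Real.exp (-α * (m i : ℝ) + birkSupBall f ψ (m i) (c i) ε)) }

/-- `𝓜(n, α, ε, Z, ψ)`: as `Mpre` but with the Birkhoff sums evaluated at the centers. -/
def MpreC (f : ℕ → X → X) (ψ : X → ℝ) (Z : Set X) (n : ℕ) (α ε : ℝ) : ℝ≥0∞ :=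
  sInf { S : ℝ≥0∞ | ∃ (u : Set ℕ) (c : ℕ → X) (m : ℕ → ℕ),
    (∀ i ∈ u, n ≤ m i) ∧ (Z ⊆ ⋃ i ∈ u, bowenBall f (m i) (c i) ε) ∧
    S = ∑' i : u, ENNReal.ofReal (Real.exp (-α * (m i : ℝ) + birkSum f ψ (m i) (c i))) }

/-- `M(α, ε, Z, ψ) = lim_{n→∞} M(n, α, ε, Z, ψ)`; the quantity is nondecreasing in `n`,
so the limit is the supremum. -/
def Mlim (f : ℕ → X → X) (ψ : X → ℝ) (Z : Set X) (α ε : ℝ) : ℝ≥0∞ :=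
  ⨆ n : ℕ, Mpre f ψ Z n α ε

/-- `𝓜(α, ε, Z, ψ) = lim_{n→∞} 𝓜(n, α, ε, Z, ψ)`. -/
def MlimC (f : ℕ → X → X) (ψ : X → ℝ) (Z : Set X) (α ε : ℝ) : ℝ≥0∞ :=
  ⨆ n : ℕ, MpreC f ψ Z n α ε

/-- `P^B(ε, Z, ψ) = inf {α : M(α, ε, Z, ψ) = 0}`, as an extended real. -/
def PBeps (f : ℕ → X → X) (ψ : X → ℝ) (Z : Set X) (ε : ℝ) : EReal :=
  sInf (Real.toEReal '' {α : ℝ | Mlim f ψ Z α ε = 0})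

/-- `𝒫^B(ε, Z, ψ) = inf {α : 𝓜(α, ε, Z, ψ) = 0}`. -/
def PBCeps (f : ℕ → X → X) (ψ : X → ℝ) (Z : Set X) (ε : ℝ) : EReal :=
  sInf (Real.toEReal '' {α : ℝ | MlimC f ψ Z α ε = 0})

/-- The Pesin–Pitskel topological pressure `P^B_{f_{1,∞}}(Z, ψ) = lim_{ε→0} P^B(ε, Z, ψ)`. -/
def PB (f : ℕ → X → X) (ψ : X → ℝ) (Z : Set X) : EReal :=
  limUnder (nhdsWithin 0 (Ioi 0)) fun ε : ℝ => PBeps f ψ Z ε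

/-- `W(n, α, ε, Z, ψ)`: the weighted analogue of `Mpre`. -/
def Wpre (f : ℕ → X → X) (ψ : X → ℝ) (Z : Set X) (n : ℕ) (α ε : ℝ) : ℝ≥0∞ :=
  sInf { S : ℝ≥0∞ | ∃ (u : Set ℕ) (cx : ℕ → X) (m : ℕ → ℕ) (c : ℕ → ℝ),
    (∀ i ∈ u, 0 < c i) ∧ (∀ i ∈ u, n ≤ m i) ∧
    (∀ z ∈ Z, 1 ≤ ∑' i : u,
      (bowenBall f (m i) (cx i) ε).indicator (fun _ => ENNReal.ofReal (c i)) z) ∧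
    S = ∑' i : u, ENNReal.ofReal (c i) *
      ENNReal.ofReal (Real.exp (-α * (m i : ℝ) + birkSupBall f ψ (m i) (cx i) ε)) }

/-- `W(α, ε, Z, ψ) = lim_{n→∞} W(n, α, ε, Z, ψ)`. -/
def Wlim (f : ℕ → X → X) (ψ : X → ℝ) (Z : Set X) (α ε : ℝ) : ℝ≥0∞ :=
  ⨆ n : ℕ, Wpre f ψ Z n α ε

/-- `P^W(ε, Z, ψ)`: the critical value of `α` at which `W(α, ε, Z, ψ)` jumps from `∞` to `0`. -/
def PWeps (f : ℕ → X → X) (ψ : X → ℝ) (Z : Set X) (ε : ℝ) : EReal :=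
  sInf (Real.toEReal '' {α : ℝ | Wlim f ψ Z α ε = 0})

/-- The weighted topological pressure `P^W_{f_{1,∞}}(Z, ψ) = lim_{ε→0} P^W(ε, Z, ψ)`. -/
def PW (f : ℕ → X → X) (ψ : X → ℝ) (Z : Set X) : EReal :=
  limUnder (nhdsWithin 0 (Ioi 0)) fun ε : ℝ => PWeps f ψ Z ε

/-- Bowen topological entropy `h^B_top(f_{1,∞}, Z)`, i.e. pressure of the zero potential. -/
def hBtop (f : ℕ → X → X) (Z : Set X) : EReal := PB f (fun _ => 0) Z

/-- Weighted Bowen topological entropy `h^{WB}_top(f_{1,∞}, Z)`. -/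
def hWBtop (f : ℕ → X → X) (Z : Set X) : EReal := PW f (fun _ => 0) Z

/-- `EReal → ℝ≥0∞`, sending `⊤` to `⊤` and everything negative to `0`. -/
def ERealToENNReal (x : EReal) : ℝ≥0∞ := if x = ⊤ then ⊤ else ENNReal.ofReal x.toReal

variable [MeasurableSpace X]

/-- The measure-theoretic local pressure
`P_μ(x,ψ) = lim_{ε→0} liminf_{n→∞} (-log μ(B_n(x,ε)) + S_{1,n}ψ(x))/n`. -/
def Ploc (f : ℕ → X → X) (μ : Measure X) (ψ : X → ℝ) (x : X) : EReal :=
  limUnder (nhdsWithin 0 (Ioi 0)) fun ε : ℝ =>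
    Filter.atTop.liminf fun n : ℕ =>
      (((n : ℝ)⁻¹ : ℝ) : EReal) *
        (-(ENNReal.log (μ (bowenBall f n x ε))) + ((birkSum f ψ n x : ℝ) : EReal))

/-- The integral of an extended-real-valued function: the difference of the lower integrals of
its positive and negative parts. -/
def ERealIntegral (μ : Measure X) (g : X → EReal) : EReal :=
  ((∫⁻ x, ERealToENNReal (g x) ∂μ : ℝ≥0∞) : EReal)
    - ((∫⁻ x, ERealToENNReal (-(g x)) ∂μ : ℝ≥0∞) : EReal)

/-- The measure-theoretic pressure `P_μ(X, ψ) = ∫ P_μ(x, ψ) dμ(x)`. -/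
def Pmeas (f : ℕ → X → X) (μ : Measure X) (ψ : X → ℝ) : EReal :=
  ERealIntegral μ (Ploc f μ ψ)

/-- The measure-theoretic local lower entropy `h̲_μ(f_{1,∞}, x)`. -/
def hloc (f : ℕ → X → X) (μ : Measure X) (x : X) : EReal := Ploc f μ (fun _ => 0) x

/-- The measure-theoretic lower entropy `h̲_μ(f_{1,∞}) = ∫ h̲_μ(f_{1,∞}, x) dμ(x)`. -/
def hmeas (f : ℕ → X → X) (μ : Measure X) : EReal := Pmeas f μ (fun _ => 0)

/-!
Fix `ε > 0` and `α' > s`, and choose `s < α < α'`. Every `x ∈ Z` has `μ(B_n(x, ε/2)) ≥ e^{-αn}`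
for infinitely many `n`. For fixed `n`, a maximal family of points of
`A_n = {x | μ(B_n(x, ε/2)) ≥ e^{-αn}}` whose balls `B_n(·, ε/2)` are pairwise disjoint has at most
`e^{αn}` members, and the balls `B_n(·, ε)` around them cover `A_n`. Using these covers for all
`n ≥ N` bounds `M(N, α', ε, Z)` by the tail `∑_{n ≥ N} e^{(α - α')n}` of a convergent geometric
series, so `M(α', ε, Z) = 0`. Weighted covers are at most as expensive as covers (take all
weights `1`), so `W(α', ε, Z) = 0` as well.
-/

open Topology

section Limits

variable {β : Type*} [CompleteLinearOrder β] [TopologicalSpace β] [OrderTopology β]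
  {F : ℝ → β} {a : ℝ}

theorem Antitone.limUnder_nhdsGT_eq_sSup (hF : Antitone F) :
    limUnder (𝓝[>] a) F = sSup (F '' Ioi a) :=
  (hF.tendsto_nhdsGT a).limUnder_eq

theorem Antitone.le_limUnder_nhdsGT (hF : Antitone F) {ε : ℝ} (hε : a < ε) :
    F ε ≤ limUnder (𝓝[>] a) F :=
  hF.limUnder_nhdsGT_eq_sSup ▸ le_sSup ⟨ε, hε, rfl⟩

theorem Antitone.limUnder_nhdsGT_le (hF : Antitone F) {b : β} (h : ∀ ε, a < ε → F ε ≤ b) :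
    limUnder (𝓝[>] a) F ≤ b :=
  hF.limUnder_nhdsGT_eq_sSup ▸ sSup_le (by rintro _ ⟨ε, hε, rfl⟩; exact h ε hε)

end Limits

theorem MeasureTheory.exists_finset_coe_eq_card_mul_le_of_pairwiseDisjoint {ι α : Type*}
    [MeasurableSpace α] (μ : Measure α) [IsFiniteMeasure μ] {u : Set ι} {B : ι → Set α}
    (hd : u.PairwiseDisjoint B) (hB : ∀ i, MeasurableSet (B i)) {c : ℝ≥0∞} (hc : 0 < c)
    (hle : ∀ i ∈ u, c ≤ μ (B i)) :
    ∃ F : Finset ι, (F : Set ι) = u ∧ (F.card : ℝ≥0∞) * c ≤ μ univ := by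
  have hfin : u.Finite := by
    have := Measure.finite_const_le_meas_of_disjoint_iUnion μ hc (As := fun i : u => B i)
      (fun i => hB i) (fun i j hij => hd i.2 j.2 (Subtype.coe_injective.ne hij))
      (measure_ne_top μ _)
    have hall : {i : u | c ≤ μ (B i)} = univ := eq_univ_of_forall fun i => hle i i.2
    rw [hall, finite_univ_iff] at this
    exact toFinite u
  refine ⟨hfin.toFinset, hfin.coe_toFinset, ?_⟩
  calc (hfin.toFinset.card : ℝ≥0∞) * c = ∑ _i ∈ hfin.toFinset, c := by
        rw [Finset.sum_const, nsmul_eq_mul]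
    _ ≤ ∑ i ∈ hfin.toFinset, μ (B i) :=
        Finset.sum_le_sum fun i hi => hle i (hfin.mem_toFinset.1 hi)
    _ = μ (⋃ i ∈ hfin.toFinset, B i) :=
        (measure_biUnion_finset (hfin.coe_toFinset.symm ▸ hd) fun i _ => hB i).symm
    _ ≤ μ univ := measure_mono (subset_univ _)

section Bowen

omit [MeasurableSpace X]

variable (f : ℕ → X → X)

theorem continuous_nIter (hf : ∀ n, Continuous (f n)) (n : ℕ) : Continuous (nIter f n) := by
  induction n with
  | zero => exact continuous_id
  | succ n ih => exact (hf n).comp ih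

theorem bowenBall_eq_biInter (n : ℕ) (x : X) (ε : ℝ) :
    bowenBall f n x ε = ⋂ j ∈ Finset.range n, nIter f j ⁻¹' Metric.ball (nIter f j x) ε := by
  ext y
  simp [bowenBall, Metric.mem_ball, dist_comm]

theorem isOpen_bowenBall (hf : ∀ n, Continuous (f n)) (n : ℕ) (x : X) (ε : ℝ) :
    IsOpen (bowenBall f n x ε) := by
  rw [bowenBall_eq_biInter]
  exact isOpen_biInter_finset fun j _ => Metric.isOpen_ball.preimage (continuous_nIter f hf j)

theorem bowenBall_mono (n : ℕ) (x : X) {ε ε' : ℝ} (h : ε ≤ ε') :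
    bowenBall f n x ε ⊆ bowenBall f n x ε' :=
  fun _ hy j hj => (hy j hj).trans_le h

theorem mem_bowenBall_self (n : ℕ) (x : X) {ε : ℝ} (hε : 0 < ε) : x ∈ bowenBall f n x ε :=
  fun j _ => by simpa using hε

theorem mem_bowenBall_of_inter_nonempty {n : ℕ} {x y : X} {δ δ' : ℝ}
    (h : (bowenBall f n x δ ∩ bowenBall f n y δ').Nonempty) :
    x ∈ bowenBall f n y (δ' + δ) := by
  obtain ⟨z, hxz, hyz⟩ := h
  intro j hj
  calc dist (nIter f j y) (nIter f j x)
      ≤ dist (nIter f j y) (nIter f j z) + dist (nIter f j z) (nIter f j x) := dist_triangle _ _ _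
    _ < δ' + δ := add_lt_add (hyz j hj) (dist_comm (nIter f j x) _ ▸ hxz j hj)

theorem birkSupBall_zero (n : ℕ) (x : X) (ε : ℝ) : birkSupBall f (fun _ => 0) n x ε = 0 := by
  have hS : ∀ t ∈ birkSum f (fun _ => 0) n '' bowenBall f n x ε, t = 0 := by
    rintro _ ⟨y, -, rfl⟩
    simp [birkSum]
  exact le_antisymm (Real.sSup_nonpos fun t ht => (hS t ht).le)
    (Real.sSup_nonneg fun t ht => (hS t ht).ge)

variable (ψ : X → ℝ) (Z : Set X)

theorem Mpre_mono {α ε : ℝ} : Monotone fun n => Mpre f ψ Z n α ε := by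
  intro n n' h
  refine sInf_le_sInf ?_
  rintro S ⟨u, c, m, hm, hZ, rfl⟩
  exact ⟨u, c, m, fun i hi => h.trans (hm i hi), hZ, rfl⟩

/-- `Nonempty X` supplies centres for the indices outside the cover: for empty `X` there are no
maps `ℕ → X`, and `Mpre` is `⊤`. -/
theorem Mpre_le_tsum [Nonempty X] {ι : Type*} [Countable ι] (c : ι → X) (m : ι → ℕ) {n : ℕ}
    {α ε : ℝ} (hm : ∀ i, n ≤ m i) (hZ : Z ⊆ ⋃ i, bowenBall f (m i) (c i) ε) :
    Mpre f ψ Z n α ε ≤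
      ∑' i, ENNReal.ofReal (Real.exp (-α * (m i : ℝ) + birkSupBall f ψ (m i) (c i) ε)) := by
  obtain ⟨g, hg⟩ := Countable.exists_injective_nat ι
  set c' := Function.extend g c fun _ => Classical.arbitrary X
  set m' := Function.extend g m fun _ => n
  have hc' : ∀ i, c' (g i) = c i := hg.extend_apply c _
  have hm' : ∀ i, m' (g i) = m i := hg.extend_apply m _
  have hm_range : ∀ k ∈ range g, n ≤ m' k := by
    rintro _ ⟨i, rfl⟩
    exact hm' i ▸ hm i
  have hcover : Z ⊆ ⋃ k ∈ range g, bowenBall f (m' k) (c' k) ε := fun z hz => by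
    obtain ⟨i, hi⟩ := mem_iUnion.1 (hZ hz)
    exact mem_biUnion ⟨i, rfl⟩ (by rwa [hc', hm'])
  calc Mpre f ψ Z n α ε
      ≤ ∑' k : range g,
          ENNReal.ofReal (Real.exp (-α * (m' k : ℝ) + birkSupBall f ψ (m' k) (c' k) ε)) :=
        sInf_le ⟨range g, c', m', hm_range, hcover, rfl⟩
    _ = _ := by
        rw [tsum_range (fun k => ENNReal.ofReal
          (Real.exp (-α * (m' k : ℝ) + birkSupBall f ψ (m' k) (c' k) ε))) hg]
        simp only [hc', hm']

theorem Wpre_le_Mpre (n : ℕ) (α ε : ℝ) : Wpre f ψ Z n α ε ≤ Mpre f ψ Z n α ε := by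
  refine sInf_le_sInf ?_
  rintro S ⟨u, c, m, hm, hZ, rfl⟩
  refine ⟨u, c, m, fun _ => 1, fun _ _ => one_pos, hm, fun z hz => ?_, by simp⟩
  obtain ⟨i, hi, hzi⟩ := mem_iUnion₂.1 (hZ hz)
  calc (1 : ℝ≥0∞) = (bowenBall f (m i) (c i) ε).indicator (fun _ => ENNReal.ofReal 1) z := by
        simp [hzi]
    _ ≤ _ := ENNReal.le_tsum (⟨i, hi⟩ : u)

theorem Mpre_zero_anti_radius {n : ℕ} {α ε₁ ε₂ : ℝ} (h : ε₁ ≤ ε₂) :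
    Mpre f (fun _ => 0) Z n α ε₂ ≤ Mpre f (fun _ => 0) Z n α ε₁ := by
  refine sInf_le_sInf ?_
  rintro S ⟨u, c, m, hm, hZ, rfl⟩
  refine ⟨u, c, m, hm, hZ.trans (biUnion_mono subset_rfl fun i _ => bowenBall_mono f _ _ h), ?_⟩
  simp only [birkSupBall_zero]

theorem Wpre_zero_anti_radius {n : ℕ} {α ε₁ ε₂ : ℝ} (h : ε₁ ≤ ε₂) :
    Wpre f (fun _ => 0) Z n α ε₂ ≤ Wpre f (fun _ => 0) Z n α ε₁ := by
  refine sInf_le_sInf ?_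
  rintro S ⟨u, cx, m, c, hc, hm, hZ, rfl⟩
  refine ⟨u, cx, m, c, hc, hm, fun z hz => (hZ z hz).trans (ENNReal.tsum_le_tsum fun i => ?_), ?_⟩
  · exact indicator_le_indicator_of_subset (bowenBall_mono f _ _ h) (fun _ => zero_le) z
  · simp only [birkSupBall_zero]

/-- `PBeps` and `PWeps` are definitionally `critValue` of `Mlim` and `Wlim`. -/
def critValue (G : ℝ → ℝ≥0∞) : EReal :=
  sInf (Real.toEReal '' {α | G α = 0})

theorem critValue_mono {G₁ G₂ : ℝ → ℝ≥0∞} (h : G₁ ≤ G₂) : critValue G₁ ≤ critValue G₂ :=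
  sInf_le_sInf (image_mono fun α hα => nonpos_iff_eq_zero.1 (hα ▸ h α))

theorem critValue_le {G : ℝ → ℝ≥0∞} {s : ℝ} (h : ∀ α, s < α → G α = 0) :
    critValue G ≤ s :=
  EReal.le_of_forall_lt_iff_le.1 fun α hα => sInf_le ⟨α, h α (EReal.coe_lt_coe_iff.1 hα), rfl⟩

theorem PBeps_zero_antitone : Antitone fun ε => PBeps f (fun _ => 0) Z ε :=
  fun _ _ h => critValue_mono fun _ => iSup_mono fun _ => Mpre_zero_anti_radius f Z h

theorem PWeps_zero_antitone : Antitone fun ε => PWeps f (fun _ => 0) Z ε :=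
  fun _ _ h => critValue_mono fun _ => iSup_mono fun _ => Wpre_zero_anti_radius f Z h

theorem PWeps_le_PBeps (ε : ℝ) : PWeps f ψ Z ε ≤ PBeps f ψ Z ε :=
  critValue_mono fun α => iSup_mono fun n => Wpre_le_Mpre f ψ Z n α ε

end Bowen

theorem exists_finset_bowenBall_cover [OpensMeasurableSpace X] (f : ℕ → X → X)
    (hf : ∀ n, Continuous (f n)) (μ : Measure X) [IsProbabilityMeasure μ] {ε : ℝ} (hε : 0 < ε)
    (n : ℕ) {c : ℝ≥0∞} (hc : 0 < c) :
    ∃ F : Finset X, (F.card : ℝ≥0∞) * c ≤ 1 ∧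
      {x | c ≤ μ (bowenBall f n x (ε / 2))} ⊆ ⋃ y ∈ F, bowenBall f n y ε := by
  obtain ⟨u, hu, hdisj, hcov⟩ := Vitali.exists_disjoint_subfamily_covering_enlargement
    (fun x => bowenBall f n x (ε / 2)) {x | c ≤ μ (bowenBall f n x (ε / 2))} (fun _ => 1) 2
    one_lt_two (fun _ _ => zero_le_one) 1 (fun _ _ => le_rfl)
    (fun x _ => ⟨x, mem_bowenBall_self f n x (half_pos hε)⟩)
  obtain ⟨F, rfl, hF⟩ := exists_finset_coe_eq_card_mul_le_of_pairwiseDisjoint μ hdisj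
    (fun x => (isOpen_bowenBall f hf n x _).measurableSet) hc fun x hx => hu hx
  refine ⟨F, hF.trans_eq measure_univ, fun x hx => ?_⟩
  obtain ⟨y, hyF, hxy, -⟩ := hcov x hx
  exact mem_biUnion hyF (add_halves ε ▸ mem_bowenBall_of_inter_nonempty f hxy)

theorem Mpre_zero_le_tsum_exp [OpensMeasurableSpace X] (f : ℕ → X → X)
    (hf : ∀ n, Continuous (f n)) (μ : Measure X) [IsProbabilityMeasure μ] {Z : Set X}
    {ε α α' : ℝ} (hε : 0 < ε)
    (hZ : ∀ x ∈ Z, ∃ᶠ n : ℕ in atTop,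
      ENNReal.ofReal (Real.exp (-α * n)) ≤ μ (bowenBall f n x (ε / 2)))
    (N : ℕ) :
    Mpre f (fun _ => 0) Z N α' ε ≤ ∑' k : ℕ, ENNReal.ofReal (Real.exp ((α - α') * ↑(k + N))) := by
  have := nonempty_of_isProbabilityMeasure μ
  choose F hFcard hFcov using fun n : ℕ =>
    exists_finset_bowenBall_cover f hf μ hε n (ENNReal.ofReal_pos.2 (Real.exp_pos (-α * n)))
  have hcover : Z ⊆ ⋃ p : Σ k, (F (k + N) : Set X), bowenBall f (p.1 + N) p.2 ε := by
    intro z hz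
    obtain ⟨n, hnN, hzn⟩ := frequently_atTop.1 (hZ z hz) N
    obtain ⟨k, rfl⟩ := Nat.exists_eq_add_of_le' hnN
    obtain ⟨y, hy, hzy⟩ := mem_iUnion₂.1 (hFcov _ hzn)
    exact mem_iUnion.2 ⟨⟨k, y, hy⟩, hzy⟩
  have hcount : ∀ n : ℕ, ((F n).card : ℝ≥0∞) * ENNReal.ofReal (Real.exp (-α' * n)) ≤
      ENNReal.ofReal (Real.exp ((α - α') * n)) := fun n => by
    rw [show -α' * (n : ℝ) = -α * n + (α - α') * n by ring, Real.exp_add,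
      ENNReal.ofReal_mul (Real.exp_pos _).le, ← mul_assoc]
    exact mul_le_of_le_one_left zero_le (hFcard n)
  calc Mpre f (fun _ => 0) Z N α' ε
      ≤ ∑' p : Σ k, (F (k + N) : Set X), ENNReal.ofReal (Real.exp
          (-α' * ↑(p.1 + N) + birkSupBall f (fun _ => 0) (p.1 + N) p.2 ε)) :=
        Mpre_le_tsum f _ Z (ι := Σ k, (F (k + N) : Set X)) (fun p => p.2) (fun p => p.1 + N)
          (fun _ => Nat.le_add_left _ _) hcover
    _ = ∑' k : ℕ, ((F (k + N)).card : ℝ≥0∞) * ENNReal.ofReal (Real.exp (-α' * ↑(k + N))) := by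
        rw [ENNReal.tsum_sigma']
        refine tsum_congr fun k => ?_
        simp only [birkSupBall_zero, add_zero, tsum_fintype, Finset.sum_const, Finset.card_univ,
          Finset.coe_sort_coe, Fintype.card_coe, nsmul_eq_mul]
    _ ≤ _ := ENNReal.tsum_le_tsum fun k => hcount (k + N)

theorem Mlim_zero_eq_zero [OpensMeasurableSpace X] (f : ℕ → X → X)
    (hf : ∀ n, Continuous (f n)) (μ : Measure X) [IsProbabilityMeasure μ] {Z : Set X}
    {ε α α' : ℝ} (hε : 0 < ε) (hαα' : α < α')
    (hZ : ∀ x ∈ Z, ∃ᶠ n : ℕ in atTop,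
      ENNReal.ofReal (Real.exp (-α * n)) ≤ μ (bowenBall f n x (ε / 2))) :
    Mlim f (fun _ => 0) Z α' ε = 0 := by
  set r := ENNReal.ofReal (Real.exp (α - α'))
  have hgeom : ∀ n : ℕ, ENNReal.ofReal (Real.exp ((α - α') * n)) = r ^ n := fun n => by
    rw [mul_comm, Real.exp_nat_mul, ENNReal.ofReal_pow (Real.exp_pos _).le]
  have hr : r < 1 := ENNReal.ofReal_lt_one.2 (Real.exp_lt_one_iff.2 (sub_neg.2 hαα'))
  have hsum : ∑' n : ℕ, ENNReal.ofReal (Real.exp ((α - α') * n)) ≠ ∞ := by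
    simp only [hgeom, ENNReal.tsum_geometric]
    exact ENNReal.inv_ne_top.2 (tsub_pos_of_lt hr).ne'
  have htail := ENNReal.tendsto_sum_nat_add _ hsum
  refine nonpos_iff_eq_zero.1 (iSup_le fun n => ge_of_tendsto htail ?_)
  filter_upwards [eventually_ge_atTop n] with N hN
  exact (Mpre_mono f _ Z hN).trans (Mpre_zero_le_tsum_exp f hf μ hε hZ N)

/-- `Ploc` is definitionally the limit of `PlocEps` as `ε → 0⁺`. -/
def PlocEps (f : ℕ → X → X) (μ : Measure X) (ψ : X → ℝ) (x : X) (ε : ℝ) : EReal :=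
  atTop.liminf fun n : ℕ =>
    (((n : ℝ)⁻¹ : ℝ) : EReal) *
      (-(ENNReal.log (μ (bowenBall f n x ε))) + ((birkSum f ψ n x : ℝ) : EReal))

theorem PlocEps_antitone (f : ℕ → X → X) (μ : Measure X) (ψ : X → ℝ) (x : X) :
    Antitone (PlocEps f μ ψ x) := by
  intro ε₁ ε₂ h
  refine liminf_le_liminf (Eventually.of_forall fun n => ?_)
  gcongr
  exact EReal.neg_le_neg_iff.2 (ENNReal.log_le_log (measure_mono (bowenBall_mono f n x h)))

theorem PlocEps_le_Ploc (f : ℕ → X → X) (μ : Measure X) (ψ : X → ℝ) (x : X) {ε : ℝ}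
    (hε : 0 < ε) : PlocEps f μ ψ x ε ≤ Ploc f μ ψ x :=
  (PlocEps_antitone f μ ψ x).le_limUnder_nhdsGT hε

theorem frequently_ofReal_exp_le_measure_bowenBall (f : ℕ → X → X) (μ : Measure X) {x : X}
    {ε α : ℝ} (h : PlocEps f μ (fun _ => 0) x ε < α) :
    ∃ᶠ n : ℕ in atTop, ENNReal.ofReal (Real.exp (-α * n)) ≤ μ (bowenBall f n x ε) := by
  refine ((frequently_lt_of_liminf_lt (by isBoundedDefault) h).and_eventually
    (eventually_gt_atTop 0)).mono fun n ⟨hn, hpos⟩ => ?_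
  simp only [birkSum, Finset.sum_const_zero, EReal.coe_zero, add_zero] at hn
  contrapose! hn
  have hlog : ENNReal.log (μ (bowenBall f n x ε)) ≤ ((-(α * n) : ℝ) : EReal) := by
    rw [neg_mul_eq_neg_mul, ← Real.log_exp (-α * n), ← ENNReal.log_ofReal_of_pos (Real.exp_pos _)]
    exact ENNReal.log_le_log hn.le
  calc (α : EReal) = (((n : ℝ)⁻¹ : ℝ) : EReal) * ((α * n : ℝ) : EReal) := by
        rw [← EReal.coe_mul, mul_comm α, inv_mul_cancel_left₀ (by positivity)]
    _ ≤ _ := by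
        gcongr
        exact EReal.le_neg.2 hlog

theorem PBeps_zero_le_of_hloc_le [OpensMeasurableSpace X] (f : ℕ → X → X)
    (hf : ∀ n, Continuous (f n)) (μ : Measure X) [IsProbabilityMeasure μ] {Z : Set X} {s ε : ℝ}
    (hε : 0 < ε) (h : ∀ x ∈ Z, hloc f μ x ≤ s) :
    PBeps f (fun _ => 0) Z ε ≤ s := by
  refine critValue_le fun α' hsα' => ?_
  obtain ⟨α, hsα, hαα'⟩ := exists_between hsα'
  refine Mlim_zero_eq_zero f hf μ hε hαα' fun x hx =>
    frequently_ofReal_exp_le_measure_bowenBall f μ ?_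
  calc PlocEps f μ (fun _ => 0) x (ε / 2) ≤ s :=
        (PlocEps_le_Ploc f μ _ x (half_pos hε)).trans (h x hx)
    _ < α := EReal.coe_lt_coe_iff.2 hsα

theorem statement2_general [BorelSpace X]
    (f : ℕ → X → X) (hf : ∀ n, Continuous (f n))
    (μ : Measure X) [IsProbabilityMeasure μ] (Z : Set X) (s : ℝ)
    (h : ∀ x ∈ Z, hloc f μ x ≤ (s : EReal)) :
    hBtop f Z ≤ (s : EReal) ∧ hWBtop f Z ≤ (s : EReal) := by
  have hB : ∀ ε, 0 < ε → PBeps f (fun _ => 0) Z ε ≤ s :=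
    fun ε hε => PBeps_zero_le_of_hloc_le f hf μ hε h
  exact ⟨(PBeps_zero_antitone f Z).limUnder_nhdsGT_le hB,
    (PWeps_zero_antitone f Z).limUnder_nhdsGT_le fun ε hε =>
      (PWeps_le_PBeps f _ Z ε).trans (hB ε hε)⟩

/-- If the local lower entropy satisfies `h̲_μ(f_{1,∞},x) ≤ s` for all `x ∈ Z`,
then the Bowen and weighted Bowen topological entropies of `Z` are at most `s`. -/
theorem statement2 [CompactSpace X] [BorelSpace X]
    (f : ℕ → X → X) (hf : ∀ n, Continuous (f n))
    (μ : Measure X) [IsProbabilityMeasure μ] (Z : Set X) (s : ℝ)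
    (h : ∀ x ∈ Z, hloc f μ x ≤ (s : EReal)) :
    hBtop f Z ≤ (s : EReal) ∧ hWBtop f Z ≤ (s : EReal) :=
  statement2_general f hf μ Z s h

end
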